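/- Let n ≥ 1, let 𝔥 ⊆ so(n) be a Lie subalgebra with derived subalgebra 𝔥′ and center z(𝔥), and let φ : 𝔥 → ℝ be a linear map with φ|_{𝔥′} = 0. Let 𝔥ol^{3,𝔥,φ} be, as a set of endomorphisms of ℝ^{n+2} in the basis U, X_1, …, X_n, V, the matrices of block form [[φ(B), X, 0],[0, A+B, −Xᵗ],[0, 0, −φ(B)]] with X ∈ ℝ^n (row), A ∈ 𝔥′, B ∈ z(𝔥). Then every R ∈ 𝓡(𝔥ol^{3,𝔥,φ}) satisfies R(U,V)U = 0. (This is the vanishing of the component R_4 for holonomy algebras of type 3.) -/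

import Mathlib

attribute [local instance 100] LieRing.ofAssociativeRing

def mid (n : ℕ) (i : Fin n) : Fin (n + 2) := ⟨(i : ℕ) + 1, by omega⟩

def lastIdx (n : ℕ) : Fin (n + 2) := ⟨n + 1, by omega⟩

/-- The Lorentzian bilinear form on `ℝ^{n+2}` with Gram matrix `[[0,0,1],[0,E_n,0],[1,0,0]]`
in the basis `U = e_0, X_1 = e_1, …, X_n = e_n, V = e_{n+1}`. -/
def eta (n : ℕ) (x y : Fin (n + 2) → ℝ) : ℝ :=
  x 0 * y (lastIdx n) + x (lastIdx n) * y 0 + ∑ i : Fin n, x (mid n i) * y (mid n i)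


/-- The vector `U = e_0`. -/
def Uvec (n : ℕ) : Fin (n + 2) → ℝ := Pi.single 0 1

/-- The vector `V = e_{n+1}`. -/
def Vvec (n : ℕ) : Fin (n + 2) → ℝ := Pi.single (lastIdx n) 1

/-- The set of basis vectors `X_1 = e_1, …, X_n = e_n`. -/
def Xset (n : ℕ) : Set (Fin (n + 2) → ℝ) := Set.range fun i : Fin n => Pi.single (mid n i) 1

/-- The `(i,j)` matrix entry of an endomorphism of `ℝ^{n+2}` in the standard basis
`U = e_0, X_1 = e_1, …, X_n = e_n, V = e_{n+1}`. -/
def entryE (n : ℕ) (M : Module.End ℝ (Fin (n + 2) → ℝ)) (i j : Fin (n + 2)) : ℝ :=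
  M (Pi.single j 1) i

/-- The holonomy algebra `𝔥ol^{3,𝔥,φ}` as a set of endomorphisms of `ℝ^{n+2}`: those whose
matrix in the basis `U, X_1, …, X_n, V` has block form
`[[φ(B), X, 0], [0, A + B, -Xᵗ], [0, 0, -φ(B)]]` with `X ∈ ℝⁿ`, `A ∈ 𝔥' = [𝔥,𝔥]`,
`B ∈ z(𝔥)`. -/
def hol3E (n : ℕ) (𝔥 : LieSubalgebra ℝ (Matrix (Fin n) (Fin n) ℝ)) (φ : 𝔥 →ₗ[ℝ] ℝ) :
    Set (Module.End ℝ (Fin (n + 2) → ℝ)) :=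
  {M | ∃ (X : Fin n → ℝ) (A B : 𝔥), A ∈ LieAlgebra.derivedSeries ℝ 𝔥 1 ∧
    B ∈ LieAlgebra.center ℝ 𝔥 ∧
    entryE n M 0 0 = φ B ∧ (∀ j, entryE n M 0 (mid n j) = X j) ∧
    entryE n M 0 (lastIdx n) = 0 ∧
    (∀ i, entryE n M (mid n i) 0 = 0) ∧
    (∀ i j, entryE n M (mid n i) (mid n j) =
      (A : Matrix (Fin n) (Fin n) ℝ) i j + (B : Matrix (Fin n) (Fin n) ℝ) i j) ∧
    (∀ i, entryE n M (mid n i) (lastIdx n) = -X i) ∧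
    entryE n M (lastIdx n) 0 = 0 ∧ (∀ j, entryE n M (lastIdx n) (mid n j) = 0) ∧
    entryE n M (lastIdx n) (lastIdx n) = -φ B}


namespace Statement17Aux

variable {n : ℕ}

lemma mid_ne_zero (i : Fin n) : mid n i ≠ 0 := by
  simp [mid, Fin.ext_iff]

lemma mid_ne_last (i : Fin n) : mid n i ≠ lastIdx n := by
  intro h
  have h2 : (i : ℕ) + 1 = n + 1 := congrArg Fin.val h
  have := i.isLt
  omega

lemma last_ne_zero : lastIdx n ≠ 0 := by
  simp [lastIdx, Fin.ext_iff]

lemma mid_inj {i j : Fin n} (h : mid n i = mid n j) : i = j := by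
  simp only [mid, Fin.ext_iff] at h ⊢
  omega

lemma fin_tri (i : Fin (n + 2)) : i = 0 ∨ i = lastIdx n ∨ ∃ k : Fin n, i = mid n k := by
  rcases i with ⟨v, hv⟩
  rcases Nat.eq_zero_or_pos v with h0 | h0
  · left; exact Fin.ext h0
  rcases Nat.lt_or_ge v (n + 1) with h1 | h1
  · right; right
    refine ⟨⟨v - 1, by omega⟩, Fin.ext ?_⟩
    show v = v - 1 + 1
    omega
  · right; left
    have : v = n + 1 := by omega
    subst this
    rfl

/-- `σ` swapping `0 ↔ lastIdx`, fixing the middle indices. -/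
def sigma (n : ℕ) : Fin (n + 2) → Fin (n + 2) := fun q =>
  if q = 0 then lastIdx n else if q = lastIdx n then 0 else q

lemma sigma_zero : sigma n 0 = lastIdx n := by simp [sigma]

lemma sigma_last : sigma n (lastIdx n) = 0 := by simp [sigma, last_ne_zero]

lemma sigma_mid (k : Fin n) : sigma n (mid n k) = mid n k := by
  simp [sigma, mid_ne_zero, mid_ne_last]

lemma eta_single (x : Fin (n + 2) → ℝ) (q : Fin (n + 2)) :
    eta n x (Pi.single q 1) = x (sigma n q) := by
  rcases fin_tri q with rfl | rfl | ⟨k, rfl⟩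
  · rw [sigma_zero]
    simp only [eta]
    rw [Pi.single_eq_same, Pi.single_eq_of_ne last_ne_zero,
      Finset.sum_eq_zero (fun i _ => by rw [Pi.single_eq_of_ne (mid_ne_zero i), mul_zero])]
    ring
  · rw [sigma_last]
    simp only [eta]
    rw [Pi.single_eq_same, Pi.single_eq_of_ne (fun h => last_ne_zero h.symm),
      Finset.sum_eq_zero (fun i _ => by rw [Pi.single_eq_of_ne (mid_ne_last i), mul_zero])]
    ring
  · rw [sigma_mid]
    simp only [eta]
    rw [Pi.single_eq_of_ne (fun h => mid_ne_zero k h.symm),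
      Pi.single_eq_of_ne (fun h => mid_ne_last k h.symm)]
    have key : ∀ i : Fin n, x (mid n i) * (Pi.single (mid n k) (1:ℝ) : Fin (n+2) → ℝ) (mid n i)
        = if i = k then x (mid n k) else 0 := by
      intro i
      by_cases h : i = k
      · subst h; rw [Pi.single_eq_same, if_pos rfl, mul_one]
      · rw [Pi.single_eq_of_ne (fun hh => h (mid_inj hh)), if_neg h, mul_zero]
    rw [Finset.sum_congr rfl (fun i _ => key i), Finset.sum_ite_eq' Finset.univ k]
    simp

lemma eta_add (x y z : Fin (n + 2) → ℝ) : eta n (x + y) z = eta n x z + eta n y z := by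
  simp only [eta, Pi.add_apply, add_mul, Finset.sum_add_distrib]
  ring

lemma eta_neg (x z : Fin (n + 2) → ℝ) : eta n (-x) z = -(eta n x z) := by
  simp only [eta, Pi.neg_apply, neg_mul, Finset.sum_neg_distrib]
  ring

lemma eta_zero (z : Fin (n + 2) → ℝ) : eta n (0 : Fin (n + 2) → ℝ) z = 0 := by
  simp [eta]

/-- Every element of `hol3E` is skew-symmetric with respect to `eta`, in the basis-entry form. -/
lemma skewE {𝔥 : LieSubalgebra ℝ (Matrix (Fin n) (Fin n) ℝ)}
    (hskew : ∀ A ∈ 𝔥, A.transpose = -A) {φ : 𝔥 →ₗ[ℝ] ℝ}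
    {M : Module.End ℝ (Fin (n + 2) → ℝ)} (hM : M ∈ hol3E n 𝔥 φ)
    (p q : Fin (n + 2)) :
    eta n (M (Pi.single p 1)) (Pi.single q 1)
      = - eta n (M (Pi.single q 1)) (Pi.single p 1) := by
  obtain ⟨X, A, B, hA, hB, h00, h0m, h0l, hm0, hmm, hml, hl0, hlm, hll⟩ := hM
  rw [eta_single, eta_single]
  show entryE n M (sigma n q) p = -entryE n M (sigma n p) q
  rcases fin_tri p with rfl | rfl | ⟨j, rfl⟩ <;>
    rcases fin_tri q with rfl | rfl | ⟨k, rfl⟩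
  · rw [sigma_zero, hl0]; try ring
  · rw [sigma_zero, sigma_last, h00, hll]; try ring
  · rw [sigma_zero, sigma_mid, hm0, hlm]; try ring
  · rw [sigma_zero, sigma_last, h00, hll]; try ring
  · rw [sigma_last, h0l]; try ring
  · rw [sigma_last, sigma_mid, hml, h0m]; try ring
  · rw [sigma_zero, sigma_mid, hm0, hlm]; try ring
  · rw [sigma_last, sigma_mid, hml, h0m]; try ring
  · rw [sigma_mid, sigma_mid, hmm, hmm]
    have hAe := congrFun (congrFun (hskew (A : Matrix (Fin n) (Fin n) ℝ) A.2) k) j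
    have hBe := congrFun (congrFun (hskew (B : Matrix (Fin n) (Fin n) ℝ) B.2) k) j
    simp only [Matrix.transpose_apply, Matrix.neg_apply] at hAe hBe
    linarith

end Statement17Aux

/-- every curvature tensor `R ∈ 𝓡(𝔥ol^{3,𝔥,φ})` satisfies `R(U,V)U = 0`
(vanishing of the component `R_4` for holonomy algebras of type 3). -/
theorem statement17 (n : ℕ) (hn : 1 ≤ n)
    (𝔥 : LieSubalgebra ℝ (Matrix (Fin n) (Fin n) ℝ))
    (hskew : ∀ A ∈ 𝔥, A.transpose = -A)
    (φ : 𝔥 →ₗ[ℝ] ℝ)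
    (hφ : ∀ A ∈ LieAlgebra.derivedSeries ℝ 𝔥 1, φ A = 0)
    (R : (Fin (n + 2) → ℝ) →ₗ[ℝ] (Fin (n + 2) → ℝ) →ₗ[ℝ] Module.End ℝ (Fin (n + 2) → ℝ))
    (hRval : ∀ u v, R u v ∈ hol3E n 𝔥 φ)
    (hRanti : ∀ u v, R u v = -R v u)
    (hRBianchi : ∀ u v w, R u v w + R v w u + R w u v = 0) :
    R (Uvec n) (Vvec n) (Uvec n) = 0 := by
  classical
  open Statement17Aux in
  -- the quadrilinear curvature form at basis vectors
  set S : Fin (n + 2) → Fin (n + 2) → Fin (n + 2) → Fin (n + 2) → ℝ :=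
    fun p q r s => eta n (R (Pi.single p 1) (Pi.single q 1) (Pi.single r 1)) (Pi.single s 1)
    with hSdef
  have hS1 : ∀ p q r s, S p q r s = -S q p r s := by
    intro p q r s
    simp only [hSdef]
    rw [hRanti (Pi.single p 1) (Pi.single q 1)]
    simp only [LinearMap.neg_apply]
    exact Statement17Aux.eta_neg _ _
  have hS2 : ∀ p q r s, S p q r s = -S p q s r := by
    intro p q r s
    exact Statement17Aux.skewE hskew (hRval (Pi.single p 1) (Pi.single q 1)) r s
  have hSB : ∀ p q r s, S p q r s + S q r p s + S r p q s = 0 := by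
    intro p q r s
    simp only [hSdef]
    rw [← Statement17Aux.eta_add, ← Statement17Aux.eta_add, hRBianchi,
      Statement17Aux.eta_zero]
  have pairsym : ∀ p q r s, S p q r s = S r s p q := by
    intro p q r s
    have b1 := hSB p q r s
    have b2 := hSB q r s p
    have b3 := hSB r s p q
    have b4 := hSB s p q r
    have c1 : S r p q s = -S p r q s := hS1 r p q s
    have c1' : S p r q s = -S p r s q := hS2 p r q s
    have c2 : S q r s p = -S q r p s := hS2 q r s p
    have c3 : S r s q p = -S r s p q := hS2 r s q p
    have c4 : S s q r p = -S q s r p := hS1 s q r p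
    have c4' : S q s r p = -S q s p r := hS2 q s r p
    have c5 : S s p r q = -S p s r q := hS1 s p r q
    have c5' : S p s r q = -S p s q r := hS2 p s r q
    have c6 : S p r s q = -S p r q s := hS2 p r s q
    have c7 : S s p q r = -S p s q r := hS1 s p q r
    have c8 : S p q s r = -S p q r s := hS2 p q s r
    have c9 : S q s p r = -S q s r p := hS2 q s p r
    linarith
  obtain ⟨X, A, B, hA, hB, h00, h0m, h0l, hm0, hmm, hml, hl0, hlm, hll⟩ :=
    hRval (Uvec n) (Vvec n)
  -- the middle block of R(U,V) is zero
  have hABzero : ∀ i j : Fin n,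
      (A : Matrix (Fin n) (Fin n) ℝ) i j + (B : Matrix (Fin n) (Fin n) ℝ) i j = 0 := by
    intro i j
    -- Bianchi identity applied to (U, V, X_j) at coordinate (mid i)
    have hb := congrFun (hRBianchi (Uvec n) (Vvec n) (Pi.single (mid n j) 1)) (mid n i)
    simp only [Pi.add_apply, Pi.zero_apply] at hb
    -- second term vanishes
    obtain ⟨X2, A2, B2, _, _, _, _, _, hm02, _, _, _, _, _⟩ :=
      hRval (Vvec n) (Pi.single (mid n j) 1)
    have ht2 : R (Vvec n) (Pi.single (mid n j) 1) (Uvec n) (mid n i) = 0 := hm02 i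
    -- third term: its X-vector vanishes via pair symmetry
    obtain ⟨X3, A3, B3, _, _, _, h0m3, _, _, _, hml3, _, _, _⟩ :=
      hRval (Pi.single (mid n j) 1) (Uvec n)
    have hX3 : X3 i = 0 := by
      have e1 : X3 i = S (mid n j) 0 (mid n i) (lastIdx n) := by
        rw [← h0m3 i]
        simp only [hSdef]
        rw [Statement17Aux.eta_single, Statement17Aux.sigma_last]
        rfl
      rw [e1, pairsym]
      -- S (mid i) (lastIdx n) (mid j) 0 = entry (lastIdx) (mid j) of R X_i V = 0
      obtain ⟨X4, A4, B4, _, _, _, _, _, _, _, _, _, hlm4, _⟩ :=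
        hRval (Pi.single (mid n i) 1) (Pi.single (lastIdx n) 1)
      simp only [hSdef]
      rw [Statement17Aux.eta_single, Statement17Aux.sigma_zero]
      exact hlm4 j
    have ht3 : R (Pi.single (mid n j) 1) (Uvec n) (Vvec n) (mid n i) = 0 := by
      have := hml3 i
      rw [hX3] at this
      simpa [entryE, Vvec] using this
    have ht1 : R (Uvec n) (Vvec n) (Pi.single (mid n j) 1) (mid n i)
        = (A : Matrix (Fin n) (Fin n) ℝ) i j + (B : Matrix (Fin n) (Fin n) ℝ) i j :=
      hmm i j
    rw [ht1, ht2, ht3] at hb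
    linarith
  have hABsub : A + B = 0 := by
    apply Subtype.ext
    show ((A + B : 𝔥) : Matrix (Fin n) (Fin n) ℝ) = 0
    ext i j
    show (A : Matrix (Fin n) (Fin n) ℝ) i j + (B : Matrix (Fin n) (Fin n) ℝ) i j = 0
    exact hABzero i j
  have hφB : φ B = 0 := by
    have hBA : B = -A := eq_neg_of_add_eq_zero_right hABsub
    rw [hBA, map_neg, hφ A hA, neg_zero]
  -- conclude coordinatewise
  funext i
  have : R (Uvec n) (Vvec n) (Uvec n) i = entryE n (R (Uvec n) (Vvec n)) i 0 := rfl
  rw [Pi.zero_apply, this]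
  rcases Statement17Aux.fin_tri i with rfl | rfl | ⟨k, rfl⟩
  · rw [h00, hφB]
  · exact hl0
  · exact hm0 k
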